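/- arXiv:math/9506225 — 2 statements merged into one kernel-verified Lean document; each statement's English description precedes it below -/
import Mathlib

section
/- For positive integers a, b, c and integer n, C(a,b,c;n) = T(3,n) T(3,n-a-b) T(3,n-a-c) T(3,n-b-c) / (T(3,n-a) T(3,n-b) T(3,n-c) T(3,n-a-b-c)), where T(3,m) = 1 for m \le 0. -/
open Finset

/-- The box product `C(a,b,c;n) = ∏_{x<a,y<b,z<c} max(n-x-y-z, 1)` for an integer `n`. -/
noncomputable def boxProd3 (a b c : ℕ) (n : ℤ) : ℤ :=
  ∏ x ∈ range a, ∏ y ∈ range b, ∏ z ∈ range c, max (n - x - y - z) 1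

/-- The simplex product `T(3,n) = ∏_{x,y,z ≥ 0} max(n-x-y-z, 1)`
(a finite product since all but finitely many factors equal 1). -/
noncomputable def simplexProd3 (n : ℤ) : ℤ :=
  ∏ᶠ (x : ℕ) (y : ℕ) (z : ℕ), max (n - x - y - z) 1

lemma cube_eval (M : ℕ) (m : ℤ) (hm : m ≤ M) :
    simplexProd3 m = ∏ x ∈ range M, ∏ y ∈ range M, ∏ z ∈ range M, max (m - x - y - z) 1 := by
  have hz : ∀ x y : ℕ, (∏ᶠ z : ℕ, max (m - x - y - z) 1)
      = ∏ z ∈ range M, max (m - x - y - z) 1 := by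
    intro x y
    apply finprod_eq_prod_of_mulSupport_subset
    intro z hzz
    simp only [Function.mem_mulSupport] at hzz
    simp only [Finset.coe_range, Set.mem_Iio]
    by_contra h
    push_neg at h
    exact hzz (max_eq_right (by omega))
  have hy : ∀ x : ℕ, (∏ᶠ (y : ℕ) (z : ℕ), max (m - x - y - z) 1)
      = ∏ y ∈ range M, ∏ z ∈ range M, max (m - x - y - z) 1 := by
    intro x
    rw [finprod_congr (hz x)]
    apply finprod_eq_prod_of_mulSupport_subset
    intro y hyy
    simp only [Function.mem_mulSupport] at hyy
    simp only [Finset.coe_range, Set.mem_Iio]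
    by_contra h
    push_neg at h
    exact hyy (Finset.prod_eq_one fun z _ => max_eq_right (by omega))
  unfold simplexProd3
  rw [finprod_congr hy]
  apply finprod_eq_prod_of_mulSupport_subset
  intro x hxx
  simp only [Function.mem_mulSupport] at hxx
  simp only [Finset.coe_range, Set.mem_Iio]
  by_contra h
  push_neg at h
  exact hxx (Finset.prod_eq_one fun y _ => Finset.prod_eq_one fun z _ =>
    max_eq_right (by omega))

lemma L1 (a M : ℕ) (ha : a ≤ M) (F : ℕ → ℤ) (hF : ∀ x, M ≤ x → F x = 1) :
    ∏ x ∈ range M, (if a ≤ x then F x else 1) = ∏ x ∈ range M, F (x + a) := by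
  rw [← Finset.prod_filter]
  have h1 : (range M).filter (fun x => a ≤ x) = Ico a M := by
    ext x; simp only [Finset.mem_filter, Finset.mem_Ico, Finset.mem_range]; omega
  rw [h1, Finset.prod_Ico_eq_prod_range]
  have h2 : ∏ i ∈ range (M - a), F (a + i) = ∏ i ∈ range M, F (a + i) :=
    Finset.prod_subset (Finset.range_subset_range.mpr (Nat.sub_le M a))
      (fun x hx hx' => hF (a + x) (by simp only [Finset.mem_range] at hx hx'; omega))
  rw [h2]
  exact Finset.prod_congr rfl fun x _ => by rw [Nat.add_comm]

lemma L1' (a M : ℕ) (F : ℕ → ℤ) (ha : a ≤ M) :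
    ∏ x ∈ range M, (if x < a then F x else 1) = ∏ x ∈ range a, F x := by
  rw [← Finset.prod_filter]
  congr 1
  ext x; simp only [Finset.mem_filter, Finset.mem_range]; omega

lemma shift3 (a b c M : ℕ) (m m' : ℤ) (hm : m ≤ M) (ha : a ≤ M) (hb : b ≤ M) (hc : c ≤ M)
    (hm' : m' = m - a - b - c) :
    (∏ x ∈ range M, ∏ y ∈ range M, ∏ z ∈ range M,
      (if a ≤ x ∧ b ≤ y ∧ c ≤ z then max (m - x - y - z) 1 else 1))
    = ∏ x ∈ range M, ∏ y ∈ range M, ∏ z ∈ range M, max (m' - x - y - z) 1 := by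
  have step_z : ∀ x y : ℕ,
      (∏ z ∈ range M, (if a ≤ x ∧ b ≤ y ∧ c ≤ z then max (m - x - y - z) 1 else 1))
      = (if a ≤ x ∧ b ≤ y then ∏ z ∈ range M, max (m - c - x - y - z) 1 else 1) := by
    intro x y
    by_cases h : a ≤ x ∧ b ≤ y
    · simp only [h.1, h.2, true_and, if_true]
      rw [L1 c M hc (fun z => max (m - x - y - z) 1) (fun z hz => max_eq_right (by omega))]
      refine Finset.prod_congr rfl fun z _ => ?_
      congr 1
      push_cast
      ring
    · rw [if_neg h]
      exact Finset.prod_eq_one fun z _ => if_neg (by tauto)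
  have step_y : ∀ x : ℕ,
      (∏ y ∈ range M, (if a ≤ x ∧ b ≤ y then ∏ z ∈ range M, max (m - c - x - y - z) 1 else 1))
      = (if a ≤ x then ∏ y ∈ range M, ∏ z ∈ range M, max (m - b - c - x - y - z) 1 else 1) := by
    intro x
    by_cases h : a ≤ x
    · simp only [h, true_and, if_true]
      rw [L1 b M hb (fun y => ∏ z ∈ range M, max (m - c - x - y - z) 1)
        (fun y hy => Finset.prod_eq_one fun z _ => max_eq_right (by omega))]
      refine Finset.prod_congr rfl fun y _ => Finset.prod_congr rfl fun z _ => ?_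
      congr 1
      push_cast
      ring
    · rw [if_neg h]
      exact Finset.prod_eq_one fun y _ => if_neg (by tauto)
  have step_x :
      (∏ x ∈ range M, (if a ≤ x then ∏ y ∈ range M, ∏ z ∈ range M,
          max (m - b - c - x - y - z) 1 else 1))
      = ∏ x ∈ range M, ∏ y ∈ range M, ∏ z ∈ range M, max (m - a - b - c - x - y - z) 1 := by
    rw [L1 a M ha (fun x => ∏ y ∈ range M, ∏ z ∈ range M, max (m - b - c - x - y - z) 1)
      (fun x hx => Finset.prod_eq_one fun y _ => Finset.prod_eq_one fun z _ =>
        max_eq_right (by omega))]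
    refine Finset.prod_congr rfl fun x _ => Finset.prod_congr rfl fun y _ =>
      Finset.prod_congr rfl fun z _ => ?_
    congr 1
    push_cast
    ring
  calc (∏ x ∈ range M, ∏ y ∈ range M, ∏ z ∈ range M,
      (if a ≤ x ∧ b ≤ y ∧ c ≤ z then max (m - x - y - z) 1 else 1))
      = ∏ x ∈ range M, (if a ≤ x then ∏ y ∈ range M, ∏ z ∈ range M,
          max (m - b - c - x - y - z) 1 else 1) := by
        refine Finset.prod_congr rfl fun x _ => ?_
        rw [← step_y x]
        exact Finset.prod_congr rfl fun y _ => step_z x y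
    _ = ∏ x ∈ range M, ∏ y ∈ range M, ∏ z ∈ range M, max (m - a - b - c - x - y - z) 1 :=
        step_x
    _ = ∏ x ∈ range M, ∏ y ∈ range M, ∏ z ∈ range M, max (m' - x - y - z) 1 := by
        refine Finset.prod_congr rfl fun x _ => Finset.prod_congr rfl fun y _ =>
          Finset.prod_congr rfl fun z _ => ?_
        congr 1
        rw [hm']

lemma box_eval (a b c M : ℕ) (ha : a ≤ M) (hb : b ≤ M) (hc : c ≤ M) (n : ℤ) :
    boxProd3 a b c n = ∏ x ∈ range M, ∏ y ∈ range M, ∏ z ∈ range M,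
      (if x < a ∧ y < b ∧ z < c then max (n - x - y - z) 1 else 1) := by
  have step_z : ∀ x y : ℕ,
      (∏ z ∈ range M, (if x < a ∧ y < b ∧ z < c then max (n - x - y - z) 1 else 1))
      = (if x < a ∧ y < b then ∏ z ∈ range c, max (n - x - y - z) 1 else 1) := by
    intro x y
    by_cases h : x < a ∧ y < b
    · simp only [h.1, h.2, true_and, if_true]
      exact L1' c M (fun z => max (n - x - y - z) 1) hc
    · rw [if_neg h]
      exact Finset.prod_eq_one fun z _ => if_neg (by tauto)
  have step_y : ∀ x : ℕ,
      (∏ y ∈ range M, (if x < a ∧ y < b then ∏ z ∈ range c, max (n - x - y - z) 1 else 1))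
      = (if x < a then ∏ y ∈ range b, ∏ z ∈ range c, max (n - x - y - z) 1 else 1) := by
    intro x
    by_cases h : x < a
    · simp only [h, true_and, if_true]
      exact L1' b M (fun y => ∏ z ∈ range c, max (n - x - y - z) 1) hb
    · rw [if_neg h]
      exact Finset.prod_eq_one fun y _ => if_neg (by tauto)
  symm
  calc (∏ x ∈ range M, ∏ y ∈ range M, ∏ z ∈ range M,
      (if x < a ∧ y < b ∧ z < c then max (n - x - y - z) 1 else 1))
      = ∏ x ∈ range M, (if x < a then ∏ y ∈ range b, ∏ z ∈ range c,
          max (n - x - y - z) 1 else 1) := by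
        refine Finset.prod_congr rfl fun x _ => ?_
        rw [← step_y x]
        exact Finset.prod_congr rfl fun y _ => step_z x y
    _ = boxProd3 a b c n :=
        L1' a M (fun x => ∏ y ∈ range b, ∏ z ∈ range c, max (n - x - y - z) 1) ha

lemma simplexProd3_pos (m : ℤ) : 0 < simplexProd3 m := by
  rw [cube_eval m.toNat m (Int.self_le_toNat m)]
  refine Finset.prod_pos fun x _ => Finset.prod_pos fun y _ => Finset.prod_pos fun z _ => ?_
  have := le_max_right (m - x - y - z) 1
  omega

lemma key_pointwise (g : ℤ) (a b c x y z : ℕ) :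
    (if x < a ∧ y < b ∧ z < c then g else 1) *
      ((if a ≤ x ∧ 0 ≤ y ∧ 0 ≤ z then g else 1) *
       (if 0 ≤ x ∧ b ≤ y ∧ 0 ≤ z then g else 1) *
       (if 0 ≤ x ∧ 0 ≤ y ∧ c ≤ z then g else 1) *
       (if a ≤ x ∧ b ≤ y ∧ c ≤ z then g else 1)) =
    g * ((if a ≤ x ∧ b ≤ y ∧ 0 ≤ z then g else 1) *
         (if a ≤ x ∧ 0 ≤ y ∧ c ≤ z then g else 1) *
         (if 0 ≤ x ∧ b ≤ y ∧ c ≤ z then g else 1)) := by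
  split_ifs <;> (try (exfalso; omega)) <;> ring

lemma main_int (a b c : ℕ) (n : ℤ) :
    boxProd3 a b c n *
      (simplexProd3 (n - a) * simplexProd3 (n - b) * simplexProd3 (n - c) *
        simplexProd3 (n - a - b - c)) =
    simplexProd3 n *
      (simplexProd3 (n - a - b) * simplexProd3 (n - a - c) * simplexProd3 (n - b - c)) := by
  set M : ℕ := a + b + c + n.toNat with hM
  have haM : a ≤ M := by omega
  have hbM : b ≤ M := by omega
  have hcM : c ≤ M := by omega
  have h0M : 0 ≤ M := by omega
  have hnM : n ≤ (M : ℤ) := by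
    have := Int.self_le_toNat n
    push_cast [hM]
    omega
  rw [cube_eval M n hnM,
      cube_eval M (n - a) (by push_cast; omega),
      cube_eval M (n - b) (by push_cast; omega),
      cube_eval M (n - c) (by push_cast; omega),
      cube_eval M (n - a - b) (by push_cast; omega),
      cube_eval M (n - a - c) (by push_cast; omega),
      cube_eval M (n - b - c) (by push_cast; omega),
      cube_eval M (n - a - b - c) (by push_cast; omega),
      box_eval a b c M haM hbM hcM n,
      ← shift3 a 0 0 M n (n - a) hnM haM h0M h0M (by push_cast; ring),
      ← shift3 0 b 0 M n (n - b) hnM h0M hbM h0M (by push_cast; ring),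
      ← shift3 0 0 c M n (n - c) hnM h0M h0M hcM (by push_cast; ring),
      ← shift3 a b 0 M n (n - a - b) hnM haM hbM h0M (by push_cast; ring),
      ← shift3 a 0 c M n (n - a - c) hnM haM h0M hcM (by push_cast; ring),
      ← shift3 0 b c M n (n - b - c) hnM h0M hbM hcM (by push_cast; ring),
      ← shift3 a b c M n (n - a - b - c) hnM haM hbM hcM (by push_cast; ring)]
  simp only [← Finset.prod_mul_distrib]
  exact Finset.prod_congr rfl fun x _ => Finset.prod_congr rfl fun y _ =>
    Finset.prod_congr rfl fun z _ => key_pointwise _ a b c x y z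

theorem boxProd3_eq (a b c : ℕ) (ha : 0 < a) (hb : 0 < b) (hc : 0 < c) (n : ℤ) :
    (∀ m : ℤ, m ≤ 0 → simplexProd3 m = 1) ∧
    (boxProd3 a b c n : ℚ) =
      (simplexProd3 n * simplexProd3 (n - a - b) * simplexProd3 (n - a - c) *
        simplexProd3 (n - b - c) : ℚ) /
      (simplexProd3 (n - a) * simplexProd3 (n - b) * simplexProd3 (n - c) *
        simplexProd3 (n - a - b - c)) := by
  constructor
  · intro m hm
    rw [cube_eval 0 m (by exact_mod_cast hm)]
    simp
  · have hpos : ∀ m : ℤ, (0 : ℚ) < (simplexProd3 m : ℚ) := fun m => by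
      exact_mod_cast simplexProd3_pos m
    have hden : ((simplexProd3 (n - a) : ℚ) * simplexProd3 (n - b) * simplexProd3 (n - c) *
        simplexProd3 (n - a - b - c)) ≠ 0 :=
      ne_of_gt (by
        have h1 := hpos (n - a); have h2 := hpos (n - b); have h3 := hpos (n - c)
        have h4 := hpos (n - a - b - c); positivity)
    rw [eq_div_iff hden]
    have h := main_int a b c n
    have h' : (boxProd3 a b c n : ℚ) *
        ((simplexProd3 (n - a) : ℚ) * simplexProd3 (n - b) * simplexProd3 (n - c) *
          simplexProd3 (n - a - b - c)) =
        (simplexProd3 n : ℚ) *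
          ((simplexProd3 (n - a - b) : ℚ) * simplexProd3 (n - a - c) *
            simplexProd3 (n - b - c)) := by
      exact_mod_cast congrArg (fun t : ℤ => (t : ℚ)) h
    push_cast at h' ⊢
    linear_combination h'
end

section
/- Clebsch-Gordan character identity: for nonnegative integers n \ge k, (\sum_{i=0}^{n} t^{n-2i}) * (\sum_{j=0}^{k} t^{k-2j}) = \sum_{r=0}^{k} \sum_{i=0}^{n+k-2r} t^{n+k-2r-2i} in Z[t, t^{-1}]. -/
open LaurentPolynomial Finset

private noncomputable def chh (m : ℕ) : LaurentPolynomial ℤ :=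
  ∑ i ∈ Finset.range (m + 1), T ((m : ℤ) - 2 * i)

private lemma chh_succ (m : ℕ) :
    chh (m + 1) = T 1 * chh m + T (-(m + 1 : ℤ)) := by
  unfold chh
  rw [Finset.mul_sum, Finset.sum_range_succ]
  congr 1
  · apply Finset.sum_congr rfl
    intro i _
    rw [← T_add]
    congr 1
    push_cast; ring
  · congr 1
    push_cast
    ring

private lemma chh_mul_T (n k : ℕ) (h : k + 1 ≤ n) :
    chh n * T (-(k + 1 : ℤ)) =
      chh (n - (k + 1)) + ∑ r ∈ Finset.range (k + 1), T (-(n + k + 1 : ℤ) + 2 * r) := by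
  unfold chh
  rw [Finset.sum_mul]
  have hn : n + 1 = (n - (k + 1) + 1) + (k + 1) := by omega
  rw [hn, Finset.sum_range_add]
  congr 1
  · apply Finset.sum_congr rfl
    intro i _
    rw [← T_add]
    congr 1
    have : ((n - (k+1) : ℕ) : ℤ) = (n : ℤ) - (k + 1) := by push_cast [h]; ring
    rw [this]; ring
  · rw [← Finset.sum_range_reflect]
    apply Finset.sum_congr rfl
    intro r hr
    simp only [Finset.mem_range] at hr
    rw [← T_add]
    congr 1
    have h3 : n - (k + 1) + 1 + (k + 1 - 1 - r) = n - r := by omega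
    rw [h3]
    have h4 : ((n - r : ℕ) : ℤ) = (n : ℤ) - r := by
      have : r ≤ n := by omega
      push_cast [this]; ring
    rw [h4]; ring

private lemma key : ∀ k n : ℕ, k ≤ n →
    chh n * chh k = ∑ r ∈ Finset.range (k + 1), chh (n + k - 2 * r) := by
  intro k
  induction k with
  | zero =>
    intro n _
    simp [chh]
  | succ k ih =>
    intro n hk
    rw [chh_succ, mul_add, mul_comm (T 1), ← mul_assoc, ih n (by omega), mul_comm _ (T 1),
      chh_mul_T n k hk, Finset.mul_sum, Finset.sum_range_succ (fun r => chh (n + (k+1) - 2 * r))]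
    have h1 : n + (k + 1) - 2 * (k + 1) = n - (k + 1) := by omega
    rw [h1, ← add_assoc, add_right_comm, ← Finset.sum_add_distrib]
    congr 1
    apply Finset.sum_congr rfl
    intro r hr
    simp only [Finset.mem_range] at hr
    have h2 : n + (k + 1) - 2 * r = (n + k - 2 * r) + 1 := by omega
    rw [h2, chh_succ]
    congr 2
    have : ((n + k - 2 * r : ℕ) : ℤ) = (n : ℤ) + k - 2 * r := by
      have : 2 * r ≤ n + k := by omega
      push_cast [this]; ring
    rw [this]; ring

/-- The Clebsch–Gordan character identity
`ch(V_n) ⬝ ch(V_k) = ∑_{r=0}^{k} ch(V_{n+k-2r})` in `ℤ[t, t⁻¹]`, for `k ≤ n`,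
where `ch(V_m) = tᵐ + t^{m-2} + ⋯ + t^{-m}`. -/
theorem clebsch_gordan_characters (n k : ℕ) (hk : k ≤ n) :
    (∑ i ∈ Finset.range (n + 1), T ((n : ℤ) - 2 * i)) *
      (∑ j ∈ Finset.range (k + 1), T ((k : ℤ) - 2 * j)) =
    ∑ r ∈ Finset.range (k + 1), ∑ i ∈ Finset.range (n + k - 2 * r + 1),
      (T ((n : ℤ) + k - 2 * r - 2 * i) : LaurentPolynomial ℤ) := by
  have := key k n hk
  unfold chh at this
  rw [this]
  apply Finset.sum_congr rfl
  intro r hr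
  simp only [Finset.mem_range] at hr
  apply Finset.sum_congr rfl
  intro i _
  congr 1
  have h2 : 2 * r ≤ n + k := by omega
  push_cast [h2]
  ring
end
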